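/- Fix R = 2/3, m ≥ 0 and q ∈ [0, 1/8]. There exist η₀ ∈ (0, 1/2) and C > 0 such that whenever ρ > 0, u ∈ ℝ³ and θ > 0 satisfy |ρ − 1| + |u| + |θ − 3/2| ≤ η₀, one has ∫_{ℝ³} (1 + |v|²)^m · e^{q|v|²} · (M_{[ρ,u,θ]}(v) − μ(v))² · μ(v)^{−1} dv ≤ C·(|ρ − 1| + |u| + |θ − 3/2|)². -/

import Mathlib

open MeasureTheory

/-- The local Maxwellian `M_{[ρ,u,θ]}(v) = ρ (2πRθ)^{−3/2} exp(−|v−u|²/(2Rθ))`. -/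
noncomputable def localMaxwellian (R ρ θ : ℝ) (u v : EuclideanSpace ℝ (Fin 3)) : ℝ :=
  ρ * (2 * Real.pi * R * θ) ^ (-(3 : ℝ) / 2) * Real.exp (-‖v - u‖ ^ 2 / (2 * R * θ))

/-- The global Maxwellian `μ(v) = (2π)^{−3/2} exp(−|v|²/2) = M_{[1,0,3/2]}` (R = 2/3). -/
noncomputable def globalMaxwellian (v : EuclideanSpace ℝ (Fin 3)) : ℝ :=
  (2 * Real.pi) ^ (-(3 : ℝ) / 2) * Real.exp (-‖v‖ ^ 2 / 2)

/-!
Since `μ` is the Maxwellian with parameters `(1, 0, 3/2)`, one has `M_{[ρ,u,θ]} = μ e^L` with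
`L = log ρ - (3/2) log (2θ/3) + |v|²/2 - 3|v-u|²/(4θ)`, and `|L| ≤ 4δ(1+|v|²)` for
`δ = |ρ-1| + |u| + |θ-3/2| ≤ 1/2`. Hence `(M-μ)²/μ = μ (e^L-1)² ≤ μ L² e^{2|L|}`. For `δ ≤ 1/64`
the factor `e^{2|L|} ≤ e^{(1+|v|²)/8}`, together with the weight `e^{q|v|²}`, `q ≤ 1/8`, still
leaves the Gaussian `e^{-|v|²/4}` from `μ`, so the weighted integrand is bounded by `δ²` times a
fixed integrable function.
-/

namespace Real

theorem abs_exp_sub_one_le_abs_mul_exp_abs (x : ℝ) : |exp x - 1| ≤ |x| * exp |x| := by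
  rcases le_total 0 x with hx | hx
  · have h : exp x * (1 - x) ≤ 1 :=
      calc exp x * (1 - x) ≤ exp x * exp (-x) := by gcongr; linarith [add_one_le_exp (-x)]
        _ = 1 := by rw [← exp_add, add_neg_cancel, exp_zero]
    rw [abs_of_nonneg (by linarith [add_one_le_exp x]), abs_of_nonneg hx]
    linarith
  · rw [abs_of_nonpos (by linarith [exp_le_one_iff.2 hx]), abs_of_nonpos hx]
    nlinarith [add_one_le_exp x, one_le_exp (neg_nonneg.2 hx)]

theorem abs_log_le_two_mul_abs_sub_one {x : ℝ} (hx : 1 / 2 ≤ x) : |log x| ≤ 2 * |x - 1| := by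
  have hx0 : 0 < x := by linarith
  have hinv : x⁻¹ * x = 1 := inv_mul_cancel₀ hx0.ne'
  rw [abs_le]
  constructor
  · nlinarith [one_sub_inv_le_log_of_pos hx0, le_abs_self (x - 1), neg_abs_le (x - 1),
      inv_pos.2 hx0]
  · linarith [log_le_sub_one_of_pos hx0, le_abs_self (x - 1), abs_nonneg (x - 1)]

theorem one_add_rpow_le_mul_exp (s : ℝ) {ε : ℝ} (hε : 0 < ε) :
    ∃ C, ∀ r, 0 ≤ r → (1 + r) ^ s ≤ C * exp (ε * r) := by
  set n := ⌈s⌉₊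
  refine ⟨n.factorial * exp ε / ε ^ n, fun r hr => ?_⟩
  have hpow : (1 + r) ^ s ≤ (1 + r) ^ n := by
    rw [← rpow_natCast]
    exact rpow_le_rpow_of_exponent_le (by linarith) (Nat.le_ceil s)
  have hexp : (ε * (1 + r)) ^ n / n.factorial ≤ exp ε * exp (ε * r) := by
    rw [← exp_add, show ε + ε * r = ε * (1 + r) by ring]
    exact pow_div_factorial_le_exp _ (by positivity) n
  calc (1 + r) ^ s ≤ (1 + r) ^ n := hpow
    _ = (ε * (1 + r)) ^ n / n.factorial * (n.factorial / ε ^ n) := by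
        rw [mul_pow]
        field_simp
    _ ≤ exp ε * exp (ε * r) * (n.factorial / ε ^ n) := by gcongr
    _ = n.factorial * exp ε / ε ^ n * exp (ε * r) := by ring

end Real

open Real

theorem integrable_exp_neg_mul_norm_sq {V : Type*} [NormedAddCommGroup V] [InnerProductSpace ℝ V]
    [FiniteDimensional ℝ V] [MeasurableSpace V] [BorelSpace V] {b : ℝ} (hb : 0 < b) :
    Integrable (fun v : V => exp (-b * ‖v‖ ^ 2)) := by
  simpa [Complex.norm_exp, ← Complex.ofReal_pow, neg_mul] using
    (GaussianFourier.integrable_cexp_neg_mul_sq_norm_add (V := V) (b := (b : ℂ))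
      (by simpa using hb) 0 0).norm

theorem integrable_one_add_norm_sq_rpow_mul_exp_neg {V : Type*} [NormedAddCommGroup V]
    [InnerProductSpace ℝ V] [FiniteDimensional ℝ V] [MeasurableSpace V] [BorelSpace V]
    (s : ℝ) {b : ℝ} (hb : 0 < b) :
    Integrable (fun v : V => (1 + ‖v‖ ^ 2) ^ s * exp (-b * ‖v‖ ^ 2)) := by
  obtain ⟨C, hC⟩ := one_add_rpow_le_mul_exp s (half_pos hb)
  refine ((integrable_exp_neg_mul_norm_sq (V := V) (half_pos hb)).const_mul C).mono'
    (by fun_prop) (Filter.Eventually.of_forall fun v => ?_)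
  have hv := hC (‖v‖ ^ 2) (by positivity)
  rw [norm_of_nonneg (by positivity)]
  calc (1 + ‖v‖ ^ 2) ^ s * exp (-b * ‖v‖ ^ 2)
      ≤ C * exp (b / 2 * ‖v‖ ^ 2) * exp (-b * ‖v‖ ^ 2) := by gcongr
    _ = C * exp (-(b / 2) * ‖v‖ ^ 2) := by
        rw [mul_assoc, ← exp_add]
        ring_nf

theorem integral_one_add_norm_sq_rpow_mul_exp_neg_pos {V : Type*} [NormedAddCommGroup V]
    [InnerProductSpace ℝ V] [FiniteDimensional ℝ V] [MeasurableSpace V] [BorelSpace V]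
    (s : ℝ) {b : ℝ} (hb : 0 < b) :
    0 < ∫ v : V, (1 + ‖v‖ ^ 2) ^ s * exp (-b * ‖v‖ ^ 2) := by
  have hcont : Continuous fun v : V => (1 + ‖v‖ ^ 2) ^ s * exp (-b * ‖v‖ ^ 2) :=
    ((continuous_const.add (continuous_norm.pow 2)).rpow_const
      fun v => Or.inl (by positivity : (1 + ‖v‖ ^ 2 : ℝ) ≠ 0)).mul (by fun_prop)
  exact integral_pos_of_integrable_nonneg_nonzero (x := 0) hcont
    (integrable_one_add_norm_sq_rpow_mul_exp_neg s hb) (fun v => by positivity) (by simp)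

theorem abs_half_norm_sq_sub_norm_sub_sq_div_le {V : Type*} [NormedAddCommGroup V]
    [InnerProductSpace ℝ V] {θ : ℝ} {u : V} (hθ : 1 ≤ θ) (hu : ‖u‖ ≤ 1) (v : V) :
    |‖v‖ ^ 2 / 2 - ‖v - u‖ ^ 2 / (2 * (2 / 3) * θ)|
      ≤ 2 * (|θ - 3 / 2| + ‖u‖) * (1 + ‖v‖ ^ 2) := by
  have hinner := abs_le.1 (abs_real_inner_le_norm v u)
  have h2v : 2 * ‖v‖ ≤ 1 + ‖v‖ ^ 2 := by nlinarith [sq_nonneg (‖v‖ - 1)]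
  have hnum : |2 * θ * ‖v‖ ^ 2 - 3 * ‖v - u‖ ^ 2| ≤ 6 * (|θ - 3 / 2| + ‖u‖) * (1 + ‖v‖ ^ 2) := by
    rw [norm_sub_sq_real, abs_le]
    have hvu : ‖u‖ * (2 * ‖v‖) ≤ ‖u‖ * (1 + ‖v‖ ^ 2) :=
      mul_le_mul_of_nonneg_left h2v (norm_nonneg u)
    have hu2 : ‖u‖ ^ 2 ≤ ‖u‖ := by nlinarith [norm_nonneg u]
    constructor <;> nlinarith [abs_nonneg (θ - 3 / 2), mul_nonneg (norm_nonneg u) (sq_nonneg ‖v‖),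
      mul_nonneg (abs_nonneg (θ - 3 / 2)) (sq_nonneg ‖v‖),
      mul_le_mul_of_nonneg_right (neg_abs_le (θ - 3 / 2)) (sq_nonneg ‖v‖),
      mul_le_mul_of_nonneg_right (le_abs_self (θ - 3 / 2)) (sq_nonneg ‖v‖)]
  have hrw : ‖v‖ ^ 2 / 2 - ‖v - u‖ ^ 2 / (2 * (2 / 3) * θ)
      = (2 * θ * ‖v‖ ^ 2 - 3 * ‖v - u‖ ^ 2) / (4 * θ) := by
    field_simp
    ring
  have hθ4 : (0 : ℝ) < 4 * θ := by linarith
  rw [hrw, abs_div, abs_of_pos hθ4, div_le_iff₀ hθ4]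
  have hX : 0 ≤ (|θ - 3 / 2| + ‖u‖) * (1 + ‖v‖ ^ 2) := by positivity
  nlinarith

noncomputable def maxwellianLogRatio (R ρ θ : ℝ) (u v : EuclideanSpace ℝ (Fin 3)) : ℝ :=
  log ρ - 3 / 2 * log (R * θ) + (‖v‖ ^ 2 / 2 - ‖v - u‖ ^ 2 / (2 * R * θ))

theorem globalMaxwellian_pos (v : EuclideanSpace ℝ (Fin 3)) : 0 < globalMaxwellian v := by
  unfold globalMaxwellian
  positivity

theorem localMaxwellian_eq_globalMaxwellian_mul_exp {R ρ θ : ℝ} (hR : 0 < R) (hρ : 0 < ρ)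
    (hθ : 0 < θ) (u v : EuclideanSpace ℝ (Fin 3)) :
    localMaxwellian R ρ θ u v = globalMaxwellian v * exp (maxwellianLogRatio R ρ θ u v) := by
  have hRθ : 0 < R * θ := mul_pos hR hθ
  rw [localMaxwellian, globalMaxwellian, maxwellianLogRatio,
    show 2 * π * R * θ = 2 * π * (R * θ) by ring, mul_rpow (by positivity) hRθ.le,
    rpow_def_of_pos hRθ,
    show log ρ - 3 / 2 * log (R * θ) + (‖v‖ ^ 2 / 2 - ‖v - u‖ ^ 2 / (2 * R * θ))
      = log ρ + (log (R * θ) * (-3 / 2) + -‖v - u‖ ^ 2 / (2 * R * θ)) - (-‖v‖ ^ 2 / 2) by ring,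
    exp_sub, exp_add, exp_add, exp_log hρ]
  field_simp

theorem abs_maxwellianLogRatio_le {ρ θ : ℝ} {u : EuclideanSpace ℝ (Fin 3)}
    (hδ : |ρ - 1| + ‖u‖ + |θ - 3 / 2| ≤ 1 / 2) (v : EuclideanSpace ℝ (Fin 3)) :
    |maxwellianLogRatio (2 / 3) ρ θ u v| ≤ 4 * (|ρ - 1| + ‖u‖ + |θ - 3 / 2|) * (1 + ‖v‖ ^ 2) := by
  have hρ : 1 / 2 ≤ ρ := by linarith [neg_abs_le (ρ - 1), norm_nonneg u, abs_nonneg (θ - 3 / 2)]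
  have hθ : 1 ≤ θ := by linarith [neg_abs_le (θ - 3 / 2), norm_nonneg u, abs_nonneg (ρ - 1)]
  have hu : ‖u‖ ≤ 1 := by linarith [abs_nonneg (θ - 3 / 2), abs_nonneg (ρ - 1)]
  have hlogρ := abs_log_le_two_mul_abs_sub_one hρ
  have hlogθ : |log (2 / 3 * θ)| ≤ 4 / 3 * |θ - 3 / 2| := by
    have h := abs_log_le_two_mul_abs_sub_one (x := 2 / 3 * θ) (by linarith)
    rw [show 2 / 3 * θ - 1 = 2 / 3 * (θ - 3 / 2) by ring, abs_mul,
      abs_of_pos (by norm_num : (0 : ℝ) < 2 / 3), ← mul_assoc] at h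
    linarith
  have hquad := abs_half_norm_sq_sub_norm_sub_sq_div_le hθ hu v
  have hv : 0 ≤ ‖v‖ ^ 2 := sq_nonneg _
  calc |maxwellianLogRatio (2 / 3) ρ θ u v|
      ≤ |log ρ| + 3 / 2 * |log (2 / 3 * θ)|
        + |‖v‖ ^ 2 / 2 - ‖v - u‖ ^ 2 / (2 * (2 / 3) * θ)| := by
        rw [maxwellianLogRatio]
        have h := abs_sub (log ρ) (3 / 2 * log (2 / 3 * θ))
        rw [abs_mul, abs_of_pos (by norm_num : (0 : ℝ) < 3 / 2)] at h
        linarith [abs_add_le (log ρ - 3 / 2 * log (2 / 3 * θ))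
          (‖v‖ ^ 2 / 2 - ‖v - u‖ ^ 2 / (2 * (2 / 3) * θ))]
    _ ≤ 4 * (|ρ - 1| + ‖u‖ + |θ - 3 / 2|) * (1 + ‖v‖ ^ 2) := by
        nlinarith [abs_nonneg (ρ - 1), abs_nonneg (θ - 3 / 2), norm_nonneg u]

theorem exp_mul_globalMaxwellian_mul_exp_le {q δ : ℝ} (hq : q ≤ 1 / 8) (hδ : δ ≤ 1 / 64)
    (v : EuclideanSpace ℝ (Fin 3)) :
    exp (q * ‖v‖ ^ 2) * globalMaxwellian v * exp (4 * (δ * (1 + ‖v‖ ^ 2))) ^ 2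
      ≤ exp (1 / 8) * (2 * π) ^ (-(3 : ℝ) / 2) * exp (-(1 / 4) * ‖v‖ ^ 2) := by
  have hv : 0 ≤ ‖v‖ ^ 2 := sq_nonneg _
  have hqv : q * ‖v‖ ^ 2 ≤ 1 / 8 * ‖v‖ ^ 2 := mul_le_mul_of_nonneg_right hq hv
  have hδv : δ * (1 + ‖v‖ ^ 2) ≤ 1 / 64 * (1 + ‖v‖ ^ 2) :=
    mul_le_mul_of_nonneg_right hδ (by positivity)
  have hsq : exp (4 * (δ * (1 + ‖v‖ ^ 2))) ^ 2 = exp (8 * (δ * (1 + ‖v‖ ^ 2))) := by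
    rw [← exp_nat_mul]
    ring_nf
  calc exp (q * ‖v‖ ^ 2) * globalMaxwellian v * exp (4 * (δ * (1 + ‖v‖ ^ 2))) ^ 2
      = (2 * π) ^ (-(3 : ℝ) / 2) *
          exp (q * ‖v‖ ^ 2 + -‖v‖ ^ 2 / 2 + 8 * (δ * (1 + ‖v‖ ^ 2))) := by
        rw [hsq, globalMaxwellian, exp_add, exp_add]
        ring
    _ ≤ (2 * π) ^ (-(3 : ℝ) / 2) * exp (1 / 8 + -(1 / 4) * ‖v‖ ^ 2) := by
        gcongr (2 * π) ^ (-(3 : ℝ) / 2) * exp ?_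
        linarith
    _ = _ := by
        rw [exp_add]
        ring

theorem weight_mul_sq_localMaxwellian_sub_div_le {m q ρ θ : ℝ} {u : EuclideanSpace ℝ (Fin 3)}
    (hq : q ≤ 1 / 8) (hρ : 0 < ρ) (hθ : 0 < θ) (hδ : |ρ - 1| + ‖u‖ + |θ - 3 / 2| ≤ 1 / 64)
    (v : EuclideanSpace ℝ (Fin 3)) :
    (1 + ‖v‖ ^ 2) ^ m * exp (q * ‖v‖ ^ 2) *
        (localMaxwellian (2 / 3) ρ θ u v - globalMaxwellian v) ^ 2 / globalMaxwellian v
      ≤ (|ρ - 1| + ‖u‖ + |θ - 3 / 2|) ^ 2 * (16 * exp (1 / 8) * (2 * π) ^ (-(3 : ℝ) / 2) *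
        ((1 + ‖v‖ ^ 2) ^ (m + 2) * exp (-(1 / 4) * ‖v‖ ^ 2))) := by
  set δ := |ρ - 1| + ‖u‖ + |θ - 3 / 2|
  set L := maxwellianLogRatio (2 / 3) ρ θ u v
  have hμ := globalMaxwellian_pos v
  have hL : |L| ≤ 4 * (δ * (1 + ‖v‖ ^ 2)) := by
    rw [← mul_assoc]
    exact abs_maxwellianLogRatio_le (hδ.trans (by norm_num)) v
  rw [localMaxwellian_eq_globalMaxwellian_mul_exp (by norm_num) hρ hθ]
  calc (1 + ‖v‖ ^ 2) ^ m * exp (q * ‖v‖ ^ 2) *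
        (globalMaxwellian v * exp L - globalMaxwellian v) ^ 2 / globalMaxwellian v
      = (1 + ‖v‖ ^ 2) ^ m * (exp (q * ‖v‖ ^ 2) * globalMaxwellian v) * |exp L - 1| ^ 2 := by
        rw [sq_abs]
        field_simp
    _ ≤ (1 + ‖v‖ ^ 2) ^ m * (exp (q * ‖v‖ ^ 2) * globalMaxwellian v) *
        (4 * (δ * (1 + ‖v‖ ^ 2)) * exp (4 * (δ * (1 + ‖v‖ ^ 2)))) ^ 2 := by
        gcongr
        exact (abs_exp_sub_one_le_abs_mul_exp_abs L).trans (by gcongr)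
    _ = 16 * δ ^ 2 * ((1 + ‖v‖ ^ 2) ^ m * (1 + ‖v‖ ^ 2) ^ 2) *
        (exp (q * ‖v‖ ^ 2) * globalMaxwellian v * exp (4 * (δ * (1 + ‖v‖ ^ 2))) ^ 2) := by
        ring
    _ ≤ 16 * δ ^ 2 * ((1 + ‖v‖ ^ 2) ^ m * (1 + ‖v‖ ^ 2) ^ 2) *
        (exp (1 / 8) * (2 * π) ^ (-(3 : ℝ) / 2) * exp (-(1 / 4) * ‖v‖ ^ 2)) := by
        exact mul_le_mul_of_nonneg_left (exp_mul_globalMaxwellian_mul_exp_le hq hδ v)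
          (by positivity)
    _ = _ := by
        rw [rpow_add (by positivity), rpow_two]
        ring

theorem maxwellian_difference_weighted_bound_general
    (m q : ℝ) (hq : q ≤ 1 / 8) :
    ∃ η₀ : ℝ, 0 < η₀ ∧ η₀ < 1 / 2 ∧ ∃ C : ℝ, 0 < C ∧
      ∀ (ρ θ : ℝ) (u : EuclideanSpace ℝ (Fin 3)), 0 < ρ → 0 < θ →
        |ρ - 1| + ‖u‖ + |θ - 3 / 2| ≤ η₀ →
        Integrable (fun v : EuclideanSpace ℝ (Fin 3) =>
          (1 + ‖v‖ ^ 2) ^ m * Real.exp (q * ‖v‖ ^ 2) *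
            (localMaxwellian (2 / 3) ρ θ u v - globalMaxwellian v) ^ 2
            / globalMaxwellian v) ∧
        (∫ v : EuclideanSpace ℝ (Fin 3),
            (1 + ‖v‖ ^ 2) ^ m * Real.exp (q * ‖v‖ ^ 2) *
              (localMaxwellian (2 / 3) ρ θ u v - globalMaxwellian v) ^ 2
              / globalMaxwellian v)
          ≤ C * (|ρ - 1| + ‖u‖ + |θ - 3 / 2|) ^ 2 := by
  set K := 16 * exp (1 / 8) * (2 * π) ^ (-(3 : ℝ) / 2)
  have hg := integrable_one_add_norm_sq_rpow_mul_exp_neg (V := EuclideanSpace ℝ (Fin 3))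
    (m + 2) (show (0 : ℝ) < 1 / 4 by norm_num)
  have hg_pos := integral_one_add_norm_sq_rpow_mul_exp_neg_pos (V := EuclideanSpace ℝ (Fin 3))
    (m + 2) (show (0 : ℝ) < 1 / 4 by norm_num)
  refine ⟨1 / 64, by norm_num, by norm_num,
    K * ∫ v, (1 + ‖v‖ ^ 2) ^ (m + 2) * exp (-(1 / 4) * ‖v‖ ^ 2), by positivity, ?_⟩
  intro ρ θ u hρ hθ hδ
  have hbound := weight_mul_sq_localMaxwellian_sub_div_le (m := m) hq hρ hθ hδ
  have hmajorant := (hg.const_mul K).const_mul ((|ρ - 1| + ‖u‖ + |θ - 3 / 2|) ^ 2)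
  have hint : Integrable (fun v : EuclideanSpace ℝ (Fin 3) =>
      (1 + ‖v‖ ^ 2) ^ m * Real.exp (q * ‖v‖ ^ 2) *
        (localMaxwellian (2 / 3) ρ θ u v - globalMaxwellian v) ^ 2 / globalMaxwellian v) := by
    refine hmajorant.mono' (Measurable.aestronglyMeasurable
      (by unfold localMaxwellian globalMaxwellian; fun_prop)) (ae_of_all _ fun v => ?_)
    rw [norm_of_nonneg (div_nonneg (by positivity) (globalMaxwellian_pos v).le)]
    exact hbound v
  refine ⟨hint, (integral_mono hint hmajorant hbound).trans_eq ?_⟩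
  rw [integral_const_mul, integral_const_mul]
  ring

/-- Weighted quadratic estimate on `M − μ`: for `m ≥ 0` and `q ∈ [0, 1/8]`, there are
`η₀ ∈ (0, 1/2)` and `C > 0` such that whenever `|ρ−1| + |u| + |θ−3/2| ≤ η₀`,
`∫ (1+|v|²)^m e^{q|v|²} (M_{[ρ,u,θ]}(v) − μ(v))² μ(v)⁻¹ dv
  ≤ C (|ρ−1| + |u| + |θ−3/2|)²` (with `R = 2/3`). -/
theorem maxwellian_difference_weighted_bound
    (m q : ℝ) (hm : 0 ≤ m) (hq0 : 0 ≤ q) (hq : q ≤ 1 / 8) :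
    ∃ η₀ : ℝ, 0 < η₀ ∧ η₀ < 1 / 2 ∧ ∃ C : ℝ, 0 < C ∧
      ∀ (ρ θ : ℝ) (u : EuclideanSpace ℝ (Fin 3)), 0 < ρ → 0 < θ →
        |ρ - 1| + ‖u‖ + |θ - 3 / 2| ≤ η₀ →
        Integrable (fun v : EuclideanSpace ℝ (Fin 3) =>
          (1 + ‖v‖ ^ 2) ^ m * Real.exp (q * ‖v‖ ^ 2) *
            (localMaxwellian (2 / 3) ρ θ u v - globalMaxwellian v) ^ 2
            / globalMaxwellian v) ∧
        (∫ v : EuclideanSpace ℝ (Fin 3),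
            (1 + ‖v‖ ^ 2) ^ m * Real.exp (q * ‖v‖ ^ 2) *
              (localMaxwellian (2 / 3) ρ θ u v - globalMaxwellian v) ^ 2
              / globalMaxwellian v)
          ≤ C * (|ρ - 1| + ‖u‖ + |θ - 3 / 2|) ^ 2 :=
  maxwellian_difference_weighted_bound_general m q hq
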